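/- Let w ∼ w' ∈ Σⁿ be neighboring strings with w[j] ≠ w'[j], compressed by LZ77 with sliding window size W. If B_i is a type-2 block of Compress(w), then s_i ≤ j + W. -/
import Mathlib


/-- A single LZ77 block `[q, len, c]`. -/
structure LZBlock (α : Type*) where
  q : ℕ
  len : ℕ
  c : α

/-- `s_i` (1-indexed start position of the `i`-th block, `i` 0-indexed). -/
def blockStart {α : Type*} (B : List (LZBlock α)) (i : ℕ) : ℕ :=
  1 + ((B.take i).map (fun b => b.len + 1)).sum

/-- `f_i` (1-indexed final position of the `i`-th block, `i` 0-indexed). -/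
def blockFin {α : Type*} (B : List (LZBlock α)) (i : ℕ) : ℕ :=
  ((B.take (i + 1)).map (fun b => b.len + 1)).sum

/-- `ℓ_i`, recovered as `f_i - s_i`. -/
def lenAt {α : Type*} (B : List (LZBlock α)) (i : ℕ) : ℕ :=
  blockFin B i - blockStart B i

/-- Non-overlapping LZ77 parse, sliding window `W`, of the length-`n` string `w`
(1-indexed positions). -/
def IsLZ77Parse {α : Type*} (W n : ℕ) (w : ℕ → α) (B : List (LZBlock α)) : Prop :=
  ((B.map (fun b => b.len + 1)).sum = n) ∧
  ∀ i : Fin B.length,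
    ((B.get i).c = w (blockStart B i.1 + (B.get i).len)) ∧
    ((B.get i).len = 0 → (B.get i).q = 0) ∧
    (0 < (B.get i).len →
      1 ≤ (B.get i).q ∧
      blockStart B i.1 ≤ (B.get i).q + W ∧
      (B.get i).q + (B.get i).len ≤ blockStart B i.1 ∧
      ∀ d < (B.get i).len, w ((B.get i).q + d) = w (blockStart B i.1 + d)) ∧
    (blockStart B i.1 + (B.get i).len + 1 ≤ n →
      ¬ ∃ q', 1 ≤ q' ∧ blockStart B i.1 ≤ q' + W ∧
          q' + (B.get i).len + 1 ≤ blockStart B i.1 ∧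
          ∀ d ≤ (B.get i).len, w (q' + d) = w (blockStart B i.1 + d))

/-- LZ77 parse with self-referencing (unbounded window). -/
def IsLZ77SRParse {α : Type*} (n : ℕ) (w : ℕ → α) (B : List (LZBlock α)) : Prop :=
  ((B.map (fun b => b.len + 1)).sum = n) ∧
  ∀ i : Fin B.length,
    ((B.get i).c = w (blockStart B i.1 + (B.get i).len)) ∧
    ((B.get i).len = 0 → (B.get i).q = 0) ∧
    (0 < (B.get i).len →
      1 ≤ (B.get i).q ∧
      (B.get i).q < blockStart B i.1 ∧
      ∀ d < (B.get i).len, w ((B.get i).q + d) = w (blockStart B i.1 + d)) ∧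
    (blockStart B i.1 + (B.get i).len + 1 ≤ n →
      ¬ ∃ q', 1 ≤ q' ∧ q' < blockStart B i.1 ∧
          ∀ d ≤ (B.get i).len, w (q' + d) = w (blockStart B i.1 + d))

/-- `w ∼ w'`: strings of length `n` differing in exactly one position. -/
def Neighbor {α : Type*} (n : ℕ) (w w' : ℕ → α) : Prop :=
  ∃ j, 1 ≤ j ∧ j ≤ n ∧ w j ≠ w' j ∧ ∀ i, i ≠ j → w i = w' i

/-- `M_i`: the set of (0-indexed) blocks of `B'` that start inside block `i` of `B`. -/
def Mset {α : Type*} (B B' : List (LZBlock α)) (i : ℕ) : Finset ℕ :=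
  (Finset.range B'.length).filter
    (fun k => blockStart B i ≤ blockStart B' k ∧ blockStart B' k ≤ blockFin B i)

/-- Indices of type-`m` blocks of `B` (relative to `B'`). -/
def typeSet {α : Type*} (B B' : List (LZBlock α)) (m : ℕ) : Finset ℕ :=
  (Finset.range B.length).filter (fun i => (Mset B B' i).card = m)

/-- Number of bits used to encode each block. -/
def codeLen (n cardS : ℕ) : ℕ :=
  2 * Nat.clog 2 n + Nat.clog 2 cardS


lemma map_take_sum_succ {α : Type*} (f : LZBlock α → ℕ) (B : List (LZBlock α))
    (k : ℕ) (hk : k < B.length) :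
    ((B.take (k+1)).map f).sum = ((B.take k).map f).sum + f (B.get ⟨k, hk⟩) := by
  rw [List.take_succ, List.getElem?_eq_getElem hk]
  simp only [Option.toList_some, List.map_append, List.sum_append, List.map_cons,
    List.map_nil, List.sum_cons, List.sum_nil, List.get_eq_getElem]
  omega

lemma map_take_sum_mono {α : Type*} (f : LZBlock α → ℕ) (B : List (LZBlock α))
    {k k' : ℕ} (h : k ≤ k') :
    ((B.take k).map f).sum ≤ ((B.take k').map f).sum := by
  have h1 : (B.take k').take k = B.take k := by
    rw [List.take_take, Nat.min_eq_left h]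
  calc ((B.take k).map f).sum = (((B.take k').take k).map f).sum := by rw [h1]
    _ ≤ (((B.take k').take k).map f).sum + (((B.take k').drop k).map f).sum :=
        Nat.le_add_right _ _
    _ = ((B.take k').map f).sum := by
        rw [← List.sum_append, ← List.map_append, List.take_append_drop]

lemma blockStart_succ {α : Type*} (B : List (LZBlock α)) (k : ℕ) (hk : k < B.length) :
    blockStart B (k+1) = blockStart B k + (B.get ⟨k, hk⟩).len + 1 := by
  unfold blockStart
  rw [map_take_sum_succ _ B k hk]
  omega

lemma blockStart_mono {α : Type*} (B : List (LZBlock α)) {k k' : ℕ} (h : k ≤ k') :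
    blockStart B k ≤ blockStart B k' := by
  unfold blockStart
  have := map_take_sum_mono (fun b => b.len + 1) B h
  omega

lemma blockFin_eq {α : Type*} (B : List (LZBlock α)) (i : ℕ) (hi : i < B.length) :
    blockFin B i = blockStart B i + (B.get ⟨i, hi⟩).len := by
  unfold blockFin blockStart
  rw [map_take_sum_succ _ B i hi]
  omega

lemma blockFin_le {α : Type*} (B : List (LZBlock α)) (i : ℕ) :
    blockFin B i ≤ (B.map (fun b => b.len + 1)).sum := by
  unfold blockFin
  have := map_take_sum_mono (fun b => b.len + 1) B (Nat.le_refl B.length)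
  conv_rhs => rw [← List.take_append_drop (i+1) B]
  rw [List.map_append, List.sum_append]
  exact Nat.le_add_right _ _


/-- Claim: type-2 blocks start within `W` of the edit, window
size `W`. Let `w ∼ w'` differ exactly at position `j`, compressed by LZ77 with
sliding window size `W`. If `B_i` is a type-2 block of `Compress(w)`, then
`s_i ≤ j + W`. -/
theorem lz77_typeTwo_window_location {α : Type*} (W n : ℕ) (hW : W ≤ n)
    (w w' : ℕ → α) (j : ℕ)
    (hj1 : 1 ≤ j) (hjn : j ≤ n) (hdiff : w j ≠ w' j)
    (hagree : ∀ i, i ≠ j → w i = w' i)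
    (B B' : List (LZBlock α))
    (hB : IsLZ77Parse W n w B) (hB' : IsLZ77Parse W n w' B')
    (i : ℕ) (hi : i < B.length)
    (htwo : (Mset B B' i).card = 2) :
    blockStart B i ≤ j + W := by
  by_contra hcon
  push_neg at hcon
  -- hcon : j + W < blockStart B i
  obtain ⟨a, b, ha, hb, hab⟩ := Finset.one_lt_card_iff.mp (by omega : 1 < (Mset B B' i).card)
  -- order them
  set k₁ := min a b with hk₁def
  set k₂ := max a b with hk₂def
  have hk₁ : k₁ ∈ Mset B B' i := by
    rcases Nat.le_total a b with h | h
    · rw [hk₁def, min_eq_left h]; exact ha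
    · rw [hk₁def, min_eq_right h]; exact hb
  have hk₂ : k₂ ∈ Mset B B' i := by
    rcases Nat.le_total a b with h | h
    · rw [hk₂def, max_eq_right h]; exact hb
    · rw [hk₂def, max_eq_left h]; exact ha
  have hk12 : k₁ < k₂ := by
    rcases Nat.lt_or_ge a b with h | h
    · rw [hk₁def, hk₂def, min_eq_left h.le, max_eq_right h.le]; exact h
    · have hba : b < a := by omega
      rw [hk₁def, hk₂def, min_eq_right h, max_eq_left h]; exact hba
  rw [Mset, Finset.mem_filter, Finset.mem_range] at hk₁ hk₂
  obtain ⟨hk₁len, hs₁lo, hs₁hi⟩ := hk₁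
  obtain ⟨hk₂len, hs₂lo, hs₂hi⟩ := hk₂
  set ℓ' := (B'.get ⟨k₁, hk₁len⟩).len with hℓ'def
  have hnext : blockStart B' (k₁+1) = blockStart B' k₁ + ℓ' + 1 :=
    blockStart_succ B' k₁ hk₁len
  have hmono : blockStart B' (k₁+1) ≤ blockStart B' k₂ := blockStart_mono B' hk12
  set ℓ := (B.get ⟨i, hi⟩).len with hℓdef
  have hfin : blockFin B i = blockStart B i + ℓ := blockFin_eq B i hi
  have hkey : blockStart B' k₁ + ℓ' + 1 ≤ blockStart B i + ℓ := by
    rw [← hfin, ← hnext]; exact hmono.trans hs₂hi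
  have hℓpos : 0 < ℓ := by omega
  obtain ⟨hBc, hBq0, hBcopy, hBmax⟩ := hB.2 ⟨i, hi⟩
  simp only [Fin.val_mk] at hBc hBq0 hBcopy hBmax
  obtain ⟨hq1, hqW, hqle, hmatch⟩ := hBcopy hℓpos
  set q := (B.get ⟨i, hi⟩).q with hqdef
  -- q > j
  have hqj : j < q := by omega
  obtain ⟨d0, hd0⟩ := Nat.le.dest hs₁lo
  -- blockStart B' k₁ = blockStart B i + d0
  have hfinle : blockFin B i ≤ n := by
    have := blockFin_le B i
    rw [hB.1] at this
    exact this
  obtain ⟨hB'c, hB'q0, hB'copy, hB'max⟩ := hB'.2 ⟨k₁, hk₁len⟩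
  simp only [Fin.val_mk] at hB'c hB'q0 hB'copy hB'max
  have hpre : blockStart B' k₁ + ℓ' + 1 ≤ n := by omega
  refine hB'max hpre ⟨q + d0, by omega, by omega, by omega, ?_⟩
  intro d hd
  have he : d0 + d < ℓ := by omega
  have h1 : w (q + (d0 + d)) = w (blockStart B i + (d0 + d)) := hmatch (d0 + d) he
  have h2 : w' (q + d0 + d) = w (q + d0 + d) := (hagree _ (by omega)).symm
  have h3 : w (blockStart B i + d0 + d) = w' (blockStart B i + d0 + d) :=
    hagree _ (by omega)
  have h4 : blockStart B' k₁ + d = blockStart B i + d0 + d := by omega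
  rw [h4, h2, ← h3]
  have : q + d0 + d = q + (d0 + d) := by omega
  rw [this, h1]
  congr 1
  omega
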